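/- arXiv:2408.09244 — 3 statements merged into one kernel-verified Lean document; each statement's English description precedes it below -/
import Mathlib

section
/- Let ρ : ℝ → ℝ³ be differentiable at t with derivative ρ̇(t), and suppose ρ(t) ≠ 0. Define ẑ(s) = ρ(s)/‖ρ(s)‖ and ω_{z⊥}(t) = (ρ(t) × ρ̇(t))/‖ρ(t)‖². Then ẑ is differentiable at t and its derivative equals ω_{z⊥}(t) × ẑ(t). -/
open scoped RealInnerProductSpace

noncomputable def cross3 (a b : EuclideanSpace ℝ (Fin 3)) : EuclideanSpace ℝ (Fin 3) :=
  (EuclideanSpace.equiv (Fin 3) ℝ).symm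
    (crossProduct ((EuclideanSpace.equiv (Fin 3) ℝ) a) ((EuclideanSpace.equiv (Fin 3) ℝ) b))

/-! The quotient rule gives `ẑ' = ρ̇ / ‖ρ‖ - (⟪ρ, ρ̇⟫ / ‖ρ‖³) ρ`, and the expansion
`(ρ × ρ̇) × ρ = ‖ρ‖² ρ̇ - ⟪ρ, ρ̇⟫ ρ` of the vector triple product identifies this with
`ω_{z⊥} × ẑ`. -/

section cross3

variable (u v w : EuclideanSpace ℝ (Fin 3)) (c : ℝ)

theorem cross3_smul_left : cross3 (c • u) v = c • cross3 u v := by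
  simp only [cross3, map_smul, LinearMap.smul_apply]

theorem cross3_smul_right : cross3 u (c • v) = c • cross3 u v := by
  simp only [cross3, map_smul]

theorem cross3_cross3 : cross3 (cross3 u v) w = ⟪u, w⟫ • v - ⟪v, w⟫ • u := by
  rw [← real_inner_comm u, ← real_inner_comm v]
  simp only [cross3, ContinuousLinearEquiv.apply_symm_apply, cross_cross_eq_smul_sub_smul, map_sub,
    map_smul, ContinuousLinearEquiv.symm_apply_apply]
  rfl

end cross3

section normalize

variable {F : Type*} [NormedAddCommGroup F] [InnerProductSpace ℝ F] {f : ℝ → F} {f' : F} {t : ℝ}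

theorem HasDerivAt.norm (hf : HasDerivAt f f' t) (h0 : f t ≠ 0) :
    HasDerivAt (fun s => ‖f s‖) (⟪f t, f'⟫ / ‖f t‖) t := by
  have h := hf.norm_sq.sqrt (by positivity)
  simp only [Real.sqrt_sq (norm_nonneg _)] at h
  convert h using 1
  field_simp

theorem HasDerivAt.inv_norm_smul (hf : HasDerivAt f f' t) (h0 : f t ≠ 0) :
    HasDerivAt (fun s => ‖f s‖⁻¹ • f s) (‖f t‖⁻¹ • f' - (⟪f t, f'⟫ / ‖f t‖ ^ 3) • f t) t := by
  refine (((hf.norm h0).inv (norm_ne_zero_iff.mpr h0)).smul hf).congr_deriv ?_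
  rw [sub_eq_add_neg, ← neg_smul]
  congr 2
  field_simp

end normalize

/-- the unit boresight direction ẑ = ρ/‖ρ‖ is differentiable with
derivative ω_{z⊥} × ẑ, where ω_{z⊥} = (ρ × ρ̇)/‖ρ‖². -/
theorem stmt2 (ρ : ℝ → EuclideanSpace ℝ (Fin 3)) (ρ' : EuclideanSpace ℝ (Fin 3)) (t : ℝ)
    (hρ : HasDerivAt ρ ρ' t) (hρ0 : ρ t ≠ 0)
    (z : ℝ → EuclideanSpace ℝ (Fin 3))
    (hz : ∀ s, z s = ‖ρ s‖⁻¹ • ρ s)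
    (ωperp : EuclideanSpace ℝ (Fin 3))
    (hω : ωperp = (‖ρ t‖ ^ 2)⁻¹ • cross3 (ρ t) ρ') :
    HasDerivAt z (cross3 ωperp (z t)) t := by
  obtain rfl : z = fun s => ‖ρ s‖⁻¹ • ρ s := funext hz
  refine (hρ.inv_norm_smul hρ0).congr_deriv ?_
  have hr : ‖ρ t‖ ≠ 0 := norm_ne_zero_iff.mpr hρ0
  rw [hω, cross3_smul_left, cross3_smul_right, cross3_cross3, real_inner_self_eq_norm_sq,
    real_inner_comm, smul_smul, smul_sub, smul_smul, smul_smul]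
  congr 2 <;> field_simp
end

section
/- Let ẑ, w ∈ ℝ³ with ‖ẑ‖ = 1, w ≠ 0 and ẑ × w ≠ 0. Set k = −w, x̂ = (ẑ × k)/‖ẑ × k‖ and ŷ = ẑ × x̂. Then the projection of −w onto the plane orthogonal to ẑ satisfies −w + ⟨w, ẑ⟩·ẑ = −‖ẑ × w‖·ŷ; in particular it is orthogonal to x̂ and parallel to ŷ. -/
/-! With `k = -w` and `n = ẑ × w` one gets `x̂ = -n / ‖n‖`, hence `ŷ = -(ẑ × n) / ‖n‖`. The
expansion `ẑ × (ẑ × w) = ⟨ẑ, w⟩ ẑ - ⟨ẑ, ẑ⟩ w` with `‖ẑ‖ = 1` identifies `ẑ × n` with the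
projection of `-w` onto `ẑ^⊥`, and this projection is orthogonal to `x̂` because `ŷ = ẑ × x̂` is. -/

open scoped RealInnerProductSpace

open WithLp Matrix

lemma ofLp_cross3 (a b : EuclideanSpace ℝ (Fin 3)) : ofLp (cross3 a b) = ofLp a ⨯₃ ofLp b := rfl

lemma real_inner_eq_dotProduct {ι : Type*} [Fintype ι] (a b : EuclideanSpace ℝ ι) :
    ⟪a, b⟫ = ofLp a ⬝ᵥ ofLp b := by
  simp [EuclideanSpace.inner_eq_star_dotProduct, dotProduct_comm]

lemma cross3_neg_right (a b : EuclideanSpace ℝ (Fin 3)) : cross3 a (-b) = -cross3 a b :=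
  ofLp_injective 2 <| by simp [ofLp_cross3]

lemma cross3_smul_right_s6 (c : ℝ) (a b : EuclideanSpace ℝ (Fin 3)) :
    cross3 a (c • b) = c • cross3 a b :=
  ofLp_injective 2 <| by simp [ofLp_cross3]

lemma inner_cross3_self_right (a b : EuclideanSpace ℝ (Fin 3)) : ⟪cross3 a b, b⟫ = 0 := by
  rw [real_inner_comm, real_inner_eq_dotProduct, ofLp_cross3, dot_cross_self]

lemma cross3_cross3_s6 (a b c : EuclideanSpace ℝ (Fin 3)) :
    cross3 a (cross3 b c) = ⟪a, c⟫ • b - ⟪a, b⟫ • c :=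
  ofLp_injective 2 <| by
    simp [ofLp_cross3, real_inner_eq_dotProduct, cross_cross_eq_smul_sub_smul', dotProduct_comm]

theorem stmt6_general (z w : EuclideanSpace ℝ (Fin 3))
    (hz : ‖z‖ = 1) (hzw : cross3 z w ≠ 0)
    (k x y : EuclideanSpace ℝ (Fin 3))
    (hk : k = -w)
    (hx : x = ‖cross3 z k‖⁻¹ • cross3 z k)
    (hy : y = cross3 z x) :
    (-w + ⟪w, z⟫ • z = -‖cross3 z w‖ • y) ∧
      ⟪-w + ⟪w, z⟫ • z, x⟫ = 0 ∧
      (∃ c : ℝ, -w + ⟪w, z⟫ • z = c • y) := by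
  set n := cross3 z w
  have hn : ‖n‖ ≠ 0 := norm_ne_zero_iff.mpr hzw
  have hzz : ⟪z, z⟫ = 1 := by rw [real_inner_self_eq_norm_sq, hz, one_pow]
  have hy' : y = -(‖n‖⁻¹ • cross3 z n) := by
    rw [hy, hx, hk, cross3_neg_right, norm_neg, cross3_smul_right_s6, cross3_neg_right, smul_neg]
  have hproj : -w + ⟪w, z⟫ • z = -‖n‖ • y := by
    rw [hy', neg_smul_neg, smul_inv_smul₀ hn, cross3_cross3_s6, hzz, one_smul, real_inner_comm]
    abel
  refine ⟨hproj, ?_, -‖n‖, hproj⟩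
  rw [hproj, hy, real_inner_smul_left, inner_cross3_self_right, mul_zero]

/-- zero-drift-angle alignment: choosing k = −w makes the projection of −w
onto the sensor plane equal to −‖ẑ × w‖ ŷ, hence orthogonal to x̂ and parallel to ŷ. -/
theorem stmt6 (z w : EuclideanSpace ℝ (Fin 3))
    (hz : ‖z‖ = 1) (hw : w ≠ 0) (hzw : cross3 z w ≠ 0)
    (k x y : EuclideanSpace ℝ (Fin 3))
    (hk : k = -w)
    (hx : x = ‖cross3 z k‖⁻¹ • cross3 z k)
    (hy : y = cross3 z x) :
    (-w + ⟪w, z⟫ • z = -‖cross3 z w‖ • y) ∧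
      ⟪-w + ⟪w, z⟫ • z, x⟫ = 0 ∧
      (∃ c : ℝ, -w + ⟪w, z⟫ • z = c • y) :=
  stmt6_general z w hz hzw k x y hk hx hy
end

section
/- Let n m : ℕ, t₀ < t_f be reals, f : (Fin n → ℝ) → (Fin m → ℝ) → ℝ → (Fin n → ℝ), L : (Fin n → ℝ) → (Fin m → ℝ) → ℝ → ℝ, φ : (Fin n → ℝ) → ℝ, and V : (Fin n → ℝ) → ℝ → ℝ. Suppose: (i) for every x, u, t, the function (y, s) ↦ V(y, s) is differentiable at (x, t) and ∂_t V(x,t) + L(x,u,t) + ⟨∇_x V(x,t), f(x,u,t)⟩ ≥ 0; (ii) V(x, t_f) = φ(x) for all x. Let x*, x : [t₀,t_f] → (Fin n → ℝ) and u*, u : [t₀,t_f] → (Fin m → ℝ) with L(x*(·),u*(·),·) and L(x(·),u(·),·) interval-integrable, x*'(t) = f(x*(t),u*(t),t) and x'(t) = f(x(t),u(t),t) for all t ∈ [t₀,t_f], x*(t₀) = x(t₀), and suppose equality holds in (i) along (x*(t), u*(t), t) for every t ∈ [t₀,t_f]. Then φ(x*(t_f)) + ∫_{t₀}^{t_f}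 L(x*(t),u*(t),t) dt ≤ φ(x(t_f)) + ∫_{t₀}^{t_f} L(x(t),u(t),t) dt. -/
/-!
Along any admissible trajectory, the chain rule gives
`d/dt V(x(t), t) = ∂ₜV + ⟨∇ₓV, f⟩ ≥ -L`, so integrating from `t₀` to `t_f` bounds the value at
the common initial point by the cost of the trajectory: `V(x(t₀), t₀) ≤ φ(x(t_f)) + ∫ L`.
Along `x*` the HJB relation is an equality, so the reverse inequality holds there.
-/

open scoped RealInnerProductSpace
open Set

theorem continuousOn_comp_prodMk_id {X : Type*} [TopologicalSpace X] {V : X → ℝ → ℝ}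
    {y : ℝ → X} {s : Set ℝ} (hV : Continuous (fun p : X × ℝ => V p.1 p.2))
    (hy : ContinuousOn y s) : ContinuousOn (fun t => V (y t) t) s :=
  hV.comp_continuousOn (hy.prodMk continuousOn_id)

section
variable {E : Type*} [NormedAddCommGroup E] [InnerProductSpace ℝ E] [CompleteSpace E]
  (V : E → ℝ → ℝ)

theorem hasDerivAt_comp_prodMk_id {y : ℝ → E} {y' : E} {t : ℝ}
    (hV : DifferentiableAt ℝ (fun p : E × ℝ => V p.1 p.2) (y t, t)) (hy : HasDerivAt y y' t) :
    HasDerivAt (fun s => V (y s) s)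
      (deriv (fun s => V (y t) s) t + ⟪gradient (fun z => V z t) (y t), y'⟫) t := by
  set D := fderiv ℝ (fun p : E × ℝ => V p.1 p.2) (y t, t)
  have hD : HasFDerivAt (fun p : E × ℝ => V p.1 p.2) D (y t, t) := hV.hasFDerivAt
  have htime : HasDerivAt (fun s => V (y t) s) (D (0, 1)) t :=
    hD.comp_hasDerivAt (f := fun s => (y t, s)) t
      ((hasDerivAt_const t (y t)).prodMk (hasDerivAt_id t))
  have hspace : HasFDerivAt (fun z => V z t) (D.comp (.inl ℝ E ℝ)) (y t) :=
    hD.comp (f := fun z => (z, t)) (y t) (hasFDerivAt_prodMk_left (y t) t)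
  have hpath : HasDerivAt (fun s => V (y s) s) (D (y', 1)) t :=
    hD.comp_hasDerivAt (f := fun s => (y s, s)) t (hy.prodMk (hasDerivAt_id t))
  rw [htime.deriv, inner_gradient_left, hspace.fderiv]
  convert hpath using 1
  simp [← map_add]

variable {V} {y v : ℝ → E} {ℓ : ℝ → ℝ} {a b : ℝ}

theorem hasDerivWithinAt_Ioi_comp_prodMk_id
    (hV : Differentiable ℝ (fun p : E × ℝ => V p.1 p.2))
    (hy : ∀ t ∈ Icc a b, HasDerivWithinAt y (v t) (Icc a b) t) {t : ℝ} (ht : t ∈ Ioo a b) :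
    HasDerivWithinAt (fun s => V (y s) s)
      (deriv (fun s => V (y t) s) t + ⟪gradient (fun z => V z t) (y t), v t⟫) (Ioi t) t :=
  (hasDerivAt_comp_prodMk_id V (hV _)
    ((hy t (Ioo_subset_Icc_self ht)).hasDerivAt (Icc_mem_nhds ht.1 ht.2))).hasDerivWithinAt

theorem le_add_integral_of_hjb_nonneg (hab : a ≤ b)
    (hV : Differentiable ℝ (fun p : E × ℝ => V p.1 p.2))
    (hy : ∀ t ∈ Icc a b, HasDerivWithinAt y (v t) (Icc a b) t)
    (hℓ : IntervalIntegrable ℓ MeasureTheory.volume a b)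
    (hHJB : ∀ t ∈ Ioo a b,
      0 ≤ deriv (fun s => V (y t) s) t + ℓ t + ⟪gradient (fun z => V z t) (y t), v t⟫) :
    V (y a) a ≤ V (y b) b + ∫ t in a..b, ℓ t := by
  have := intervalIntegral.integral_le_sub_of_hasDeriv_right_of_le (φ := fun t => -ℓ t) hab
    (continuousOn_comp_prodMk_id hV.continuous fun t ht => (hy t ht).continuousWithinAt)
    (fun t ht => hasDerivWithinAt_Ioi_comp_prodMk_id hV hy ht)
    ((intervalIntegrable_iff_integrableOn_Icc_of_le hab).mp hℓ).neg
    (fun t ht => by linarith [hHJB t ht])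
  rw [intervalIntegral.integral_neg] at this
  linarith

theorem add_integral_le_of_hjb_nonpos (hab : a ≤ b)
    (hV : Differentiable ℝ (fun p : E × ℝ => V p.1 p.2))
    (hy : ∀ t ∈ Icc a b, HasDerivWithinAt y (v t) (Icc a b) t)
    (hℓ : IntervalIntegrable ℓ MeasureTheory.volume a b)
    (hHJB : ∀ t ∈ Ioo a b,
      deriv (fun s => V (y t) s) t + ℓ t + ⟪gradient (fun z => V z t) (y t), v t⟫ ≤ 0) :
    V (y b) b + ∫ t in a..b, ℓ t ≤ V (y a) a := by
  have := intervalIntegral.sub_le_integral_of_hasDeriv_right_of_le (φ := fun t => -ℓ t) hab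
    (continuousOn_comp_prodMk_id hV.continuous fun t ht => (hy t ht).continuousWithinAt)
    (fun t ht => hasDerivWithinAt_Ioi_comp_prodMk_id hV hy ht)
    ((intervalIntegrable_iff_integrableOn_Icc_of_le hab).mp hℓ).neg
    (fun t ht => by linarith [hHJB t ht])
  rw [intervalIntegral.integral_neg] at this
  linarith

end

/-- Hamilton–Jacobi–Bellman verification theorem. If V satisfies the HJB
partial differential inequality ∂ₜV + L + ⟨∇ₓV, f⟩ ≥ 0 with terminal condition
V(·, t_f) = φ, then a trajectory along which this holds with equality has total cost
no greater than any other admissible trajectory with the same initial state. -/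
theorem stmt16 (n m : ℕ) (t₀ t_f : ℝ) (ht : t₀ < t_f)
    (f : EuclideanSpace ℝ (Fin n) → (Fin m → ℝ) → ℝ → EuclideanSpace ℝ (Fin n))
    (L : EuclideanSpace ℝ (Fin n) → (Fin m → ℝ) → ℝ → ℝ)
    (φ : EuclideanSpace ℝ (Fin n) → ℝ)
    (V : EuclideanSpace ℝ (Fin n) → ℝ → ℝ)
    -- (i) V is differentiable and satisfies the HJB inequality at every (x, u, t):
    (hdiff : ∀ (x : EuclideanSpace ℝ (Fin n)) (t : ℝ),
      DifferentiableAt ℝ (fun p : EuclideanSpace ℝ (Fin n) × ℝ => V p.1 p.2) (x, t))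
    (hHJB : ∀ (x : EuclideanSpace ℝ (Fin n)) (u : Fin m → ℝ) (t : ℝ),
      0 ≤ deriv (fun s => V x s) t + L x u t
          + ⟪gradient (fun y => V y t) x, f x u t⟫)
    -- (ii) terminal condition:
    (hterm : ∀ x, V x t_f = φ x)
    -- the two admissible state–control trajectories:
    (xs x : ℝ → EuclideanSpace ℝ (Fin n)) (us u : ℝ → (Fin m → ℝ))
    (hLint_s : IntervalIntegrable (fun t => L (xs t) (us t) t) MeasureTheory.volume t₀ t_f)
    (hLint : IntervalIntegrable (fun t => L (x t) (u t) t) MeasureTheory.volume t₀ t_f)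
    (hxs : ∀ t ∈ Set.Icc t₀ t_f,
      HasDerivWithinAt xs (f (xs t) (us t) t) (Set.Icc t₀ t_f) t)
    (hx : ∀ t ∈ Set.Icc t₀ t_f,
      HasDerivWithinAt x (f (x t) (u t) t) (Set.Icc t₀ t_f) t)
    (hinit : xs t₀ = x t₀)
    -- equality holds in the HJB relation along the optimal trajectory:
    (heq : ∀ t ∈ Set.Icc t₀ t_f,
      deriv (fun s => V (xs t) s) t + L (xs t) (us t) t
        + ⟪gradient (fun y => V y t) (xs t), f (xs t) (us t) t⟫ = 0) :
    φ (xs t_f) + ∫ t in t₀..t_f, L (xs t) (us t) t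
      ≤ φ (x t_f) + ∫ t in t₀..t_f, L (x t) (u t) t := by
  have hV : Differentiable ℝ (fun p : EuclideanSpace ℝ (Fin n) × ℝ => V p.1 p.2) :=
    fun p => hdiff p.1 p.2
  calc φ (xs t_f) + ∫ t in t₀..t_f, L (xs t) (us t) t
      = V (xs t_f) t_f + ∫ t in t₀..t_f, L (xs t) (us t) t := by rw [hterm]
    _ ≤ V (xs t₀) t₀ :=
      add_integral_le_of_hjb_nonpos ht.le hV hxs hLint_s
        fun t hτ => (heq t (Ioo_subset_Icc_self hτ)).le
    _ = V (x t₀) t₀ := by rw [hinit]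
    _ ≤ V (x t_f) t_f + ∫ t in t₀..t_f, L (x t) (u t) t :=
      le_add_integral_of_hjb_nonneg ht.le hV hx hLint fun t _ => hHJB (x t) (u t) t
    _ = φ (x t_f) + ∫ t in t₀..t_f, L (x t) (u t) t := by rw [hterm]
end
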